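/- Assume M_{{1}} ≤ M_{{j}} for all j ∈ [n] and M_{{1}} > M_{[n]}. Let Ĵ = { j ∈ [n] : min_{x∈Δ_m} u^L(x,j) < M_{{1}} } (which is nonempty), fix γ > 0 and β ∈ ℝ, and define ũ^L(x,j) = (u^L(x,j) − β)/γ for j ∈ Ĵ and ũ^L(x,j) = W for j ∉ Ĵ, where W = 1 + max_{i∈[m], ℓ∈Ĵ} (u^L(i,ℓ) − β)/γ. Write M̃_S = max_{x∈Δ_m} min_{j∈S} ũ^L(x,j). Then for any J ⊆ [n] and x* ∈ Δ_m: (u^L(x*,j) = M_J = M_{[n]} for all j ∈ J) if and only if (ũ^L(x*,j) = M̃_J = M̃_{[n]} for all j ∈ J). -/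

import Mathlib

open scoped Classical
open Finset

noncomputable section

/-- The leader's mixed-strategy simplex Δ_m. -/
def simplex (m : ℕ) : Set (Fin m → ℝ) := stdSimplex ℝ (Fin m)

/-- Linear extension of a payoff matrix to mixed strategies: u(x,j) = ∑ i, x i * u i j. -/
def pay {m n : ℕ} (u : Fin m → Fin n → ℝ) (x : Fin m → ℝ) (j : Fin n) : ℝ :=
  ∑ i, x i * u i j

/-- Inner product on ℝ^m. -/
def dot {m : ℕ} (a x : Fin m → ℝ) : ℝ := ∑ i, a i * x i

/-- min_{j ∈ S} u(x, j). -/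
def minOnS {m n : ℕ} (u : Fin m → Fin n → ℝ) (S : Set (Fin n)) (x : Fin m → ℝ) : ℝ :=
  sInf ((fun j => pay u x j) '' S)

/-- The leader's maximin value M_S = max_{x∈Δ_m} min_{j∈S} u(x,j). -/
def Mval {m n : ℕ} (u : Fin m → Fin n → ℝ) (S : Set (Fin n)) : ℝ :=
  sSup (minOnS u S '' simplex m)

/-- The set 𝓜_S of maximin strategies. -/
def argMM {m n : ℕ} (u : Fin m → Fin n → ℝ) (S : Set (Fin n)) : Set (Fin m → ℝ) :=
  {x ∈ simplex m | minOnS u S x = Mval u S}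

/-- The follower's best-response set BR(x) = argmax_j uF(x,j). -/
def BR {m n : ℕ} (uF : Fin m → Fin n → ℝ) (x : Fin m → ℝ) : Set (Fin n) :=
  {j | ∀ j', pay uF x j' ≤ pay uF x j}

/-- Strong Stackelberg equilibrium of the game (uL, uF). -/
def SSE {m n : ℕ} (uL uF : Fin m → Fin n → ℝ) (x : Fin m → ℝ) (j : Fin n) : Prop :=
  x ∈ simplex m ∧ j ∈ BR uF x ∧
    ∀ x' ∈ simplex m, ∀ j' ∈ BR uF x', pay uL x' j' ≤ pay uL x j

/-- (x, j) is inducible with respect to the leader payoff uL. -/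
def Inducible {m n : ℕ} (uL : Fin m → Fin n → ℝ) (x : Fin m → ℝ) (j : Fin n) : Prop :=
  ∃ uF : Fin m → Fin n → ℝ, SSE uL uF x j

/-- μ is a (maximin-)cover of S w.r.t. uL: max_{x∈𝓜_S} max_{j∈BR(x)} uL(x,j) < M_S. -/
def IsCover {m n : ℕ} (uL μ : Fin m → Fin n → ℝ) (S : Set (Fin n)) : Prop :=
  ∀ x ∈ argMM uL S, ∀ j ∈ BR μ x, pay uL x j < Mval uL S

/-- μ is a proper cover of S w.r.t. uL. -/
def IsProperCover {m n : ℕ} (uL μ : Fin m → Fin n → ℝ) (S : Set (Fin n)) : Prop :=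
  IsCover uL μ S ∧ ∀ x ∈ simplex m, ∀ j ∈ S, j ∉ BR μ x

/-- Ĵ = { j ∈ [n] : min_{x∈Δ_m} u^L(x,j) < M_{1} } (action 1 is j1). -/
def Jhat {m n : ℕ} (uL : Fin m → Fin n → ℝ) (j1 : Fin n) : Set (Fin n) :=
  {j | sInf ((fun x => pay uL x j) '' simplex m) < Mval uL {j1}}

/-- W = 1 + max_{i∈[m], ℓ∈Ĵ} (u^L(i,ℓ) − β)/γ. -/
def Wval {m n : ℕ} (uL : Fin m → Fin n → ℝ) (j1 : Fin n) (γ β : ℝ) : ℝ :=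
  1 + sSup {v : ℝ | ∃ i : Fin m, ∃ ℓ ∈ Jhat uL j1, v = (uL i ℓ - β) / γ}

/-- The strategically equivalent surrogate leader payoff ũ^L:
ũ^L(x,j) = (u^L(x,j) − β)/γ for j ∈ Ĵ and ũ^L(x,j) = W otherwise
(as a matrix; the linear extension agrees on Δ_m). -/
def tuL15 {m n : ℕ} (uL : Fin m → Fin n → ℝ) (j1 : Fin n) (γ β : ℝ) :
    Fin m → Fin n → ℝ :=
  fun i j => if j ∈ Jhat uL j1 then (uL i j - β) / γ else Wval uL j1 γ β

/-! Columns outside `Ĵ` never attain `min_j u^L(x, j)` on the simplex: their values are at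
least `M_{1} > M_{[n]} ≥ min_j u^L(x, j)`. In `ũ^L` they sit at the constant `W`, above every
`Ĵ`-column. So in both games the maximin problem over `[n]` reduces to `Ĵ`, where `ũ^L` is the
image of `u^L` under the increasing affine map `t ↦ (t - β) / γ`; and either equality condition
on `J` forces `J ⊆ Ĵ`. -/

section Maximin

variable {m n : ℕ} {u v : Fin m → Fin n → ℝ} {S T : Set (Fin n)} {x : Fin m → ℝ} {j : Fin n}

lemma simplex_nonempty (hm : 0 < m) : (simplex m).Nonempty :=
  ⟨Pi.single ⟨0, hm⟩ 1, single_mem_stdSimplex ℝ _⟩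

lemma continuous_pay (u : Fin m → Fin n → ℝ) (j : Fin n) :
    Continuous fun x : Fin m → ℝ => pay u x j :=
  continuous_finsetSum _ fun i _ => (continuous_apply i).mul continuous_const

lemma pay_le_of_forall_le {c : ℝ} (hx : x ∈ simplex m) (h : ∀ i, u i j ≤ c) : pay u x j ≤ c :=
  calc pay u x j ≤ ∑ i, x i * c :=
        Finset.sum_le_sum fun i _ => mul_le_mul_of_nonneg_left (h i) (hx.1 i)
    _ = c := by rw [← Finset.sum_mul, hx.2, one_mul]

lemma pay_eq_of_forall_eq {c : ℝ} (hx : x ∈ simplex m) (h : ∀ i, u i j = c) : pay u x j = c := by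
  simp only [pay, h, ← Finset.sum_mul, hx.2, one_mul]

lemma minOnS_le_pay (hj : j ∈ S) : minOnS u S x ≤ pay u x j :=
  csInf_le ((Set.toFinite S).image _).bddBelow ⟨j, hj, rfl⟩

lemma exists_minOnS_eq_pay (hS : S.Nonempty) (x : Fin m → ℝ) :
    ∃ j ∈ S, minOnS u S x = pay u x j := by
  obtain ⟨j, hj, hje⟩ := (hS.image _).csInf_mem ((Set.toFinite S).image fun j => pay u x j)
  exact ⟨j, hj, hje.symm⟩

lemma continuous_minOnS (hS : S.Nonempty) : Continuous (minOnS u S) := by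
  have hne : (Set.toFinite S).toFinset.Nonempty := (Set.Finite.toFinset_nonempty _).mpr hS
  have hinf : minOnS u S = fun x => (Set.toFinite S).toFinset.inf' hne fun j => pay u x j := by
    funext x
    rw [Finset.inf'_eq_csInf_image, Set.Finite.coe_toFinset]
    rfl
  rw [hinf]
  exact Continuous.finset_inf'_apply hne fun j _ => continuous_pay u j

lemma minOnS_eq_of_lt_pay (hS : S.Nonempty) (hTS : T ⊆ S)
    (h : ∀ j ∈ S, j ∉ T → minOnS u S x < pay u x j) : minOnS u S x = minOnS u T x := by
  obtain ⟨j, hjS, hj⟩ := exists_minOnS_eq_pay (u := u) hS x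
  have hjT : j ∈ T := by_contra fun hjT => (h j hjS hjT).ne hj
  refine le_antisymm ?_ (hj ▸ minOnS_le_pay hjT)
  exact csInf_le_csInf ((Set.toFinite S).image _).bddBelow (Set.Nonempty.image _ ⟨j, hjT⟩)
    (Set.image_mono hTS)

lemma minOnS_eq_comp {f : ℝ → ℝ} (hf : Monotone f) (hS : S.Nonempty)
    (h : ∀ j ∈ S, pay v x j = f (pay u x j)) : minOnS v S x = f (minOnS u S x) := by
  obtain ⟨j, hjS, hj⟩ := exists_minOnS_eq_pay (u := u) hS x
  obtain ⟨k, hkS, hk⟩ := exists_minOnS_eq_pay (u := v) hS x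
  refine le_antisymm ?_ ?_
  · calc minOnS v S x ≤ pay v x j := minOnS_le_pay hjS
      _ = f (minOnS u S x) := by rw [h j hjS, hj]
  · calc f (minOnS u S x) ≤ f (pay u x k) := hf (minOnS_le_pay hkS)
      _ = minOnS v S x := by rw [← h k hkS, hk]

lemma isGreatest_Mval (hm : 0 < m) (hS : S.Nonempty) :
    IsGreatest (minOnS u S '' simplex m) (Mval u S) := by
  obtain ⟨x, hx, hmax⟩ := (isCompact_stdSimplex _ _).exists_isMaxOn (simplex_nonempty hm)
    (continuous_minOnS hS).continuousOn
  have hG : IsGreatest (minOnS u S '' simplex m) (minOnS u S x) :=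
    ⟨⟨x, hx, rfl⟩, by rintro _ ⟨y, hy, rfl⟩; exact hmax hy⟩
  rw [Mval, hG.csSup_eq]
  exact hG

lemma minOnS_le_Mval (hS : S.Nonempty) (hx : x ∈ simplex m) : minOnS u S x ≤ Mval u S :=
  le_csSup ((isCompact_stdSimplex _ _).image (continuous_minOnS hS)).bddAbove ⟨x, hx, rfl⟩

lemma Mval_eq_comp {f : ℝ → ℝ} (hm : 0 < m) (hS : S.Nonempty) (hf : Monotone f)
    (h : ∀ x ∈ simplex m, minOnS v T x = f (minOnS u S x)) : Mval v T = f (Mval u S) := by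
  have himage : minOnS v T '' simplex m = f '' (minOnS u S '' simplex m) := by
    rw [Set.image_image]
    exact Set.image_congr h
  rw [Mval, himage]
  exact (hf.map_isGreatest (isGreatest_Mval hm hS)).csSup_eq

end Maximin

section Surrogate

variable {m n : ℕ} {uL : Fin m → Fin n → ℝ} {j1 : Fin n} {γ β : ℝ}
  {S : Set (Fin n)} {x : Fin m → ℝ} {j : Fin n}

lemma monotone_sub_div (β : ℝ) (hγ : 0 ≤ γ) : Monotone fun t : ℝ => (t - β) / γ :=
  fun _ _ h => div_le_div_of_nonneg_right (sub_le_sub_right h β) hγ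

lemma mem_Jhat_of_pay_lt (hx : x ∈ simplex m) (h : pay uL x j < Mval uL {j1}) :
    j ∈ Jhat uL j1 :=
  lt_of_le_of_lt
    (csInf_le ((isCompact_stdSimplex _ _).image (continuous_pay uL j)).bddBelow ⟨x, hx, rfl⟩) h

lemma Jhat_nonempty (hm : 0 < m) (hM1 : Mval uL Set.univ < Mval uL {j1}) :
    (Jhat uL j1).Nonempty := by
  obtain ⟨x, hx⟩ := simplex_nonempty hm
  obtain ⟨j, -, hj⟩ := exists_minOnS_eq_pay (u := uL) ⟨j1, Set.mem_univ j1⟩ x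
  refine ⟨j, mem_Jhat_of_pay_lt hx ?_⟩
  rw [← hj]
  exact (minOnS_le_Mval ⟨j1, Set.mem_univ j1⟩ hx).trans_lt hM1

lemma minOnS_univ_eq_minOnS_Jhat (hM1 : Mval uL Set.univ < Mval uL {j1}) (hx : x ∈ simplex m) :
    minOnS uL Set.univ x = minOnS uL (Jhat uL j1) x := by
  have huniv : (Set.univ : Set (Fin n)).Nonempty := ⟨j1, Set.mem_univ j1⟩
  refine minOnS_eq_of_lt_pay huniv (Set.subset_univ _) fun j _ hj => not_le.mp fun hle => ?_
  exact hj (mem_Jhat_of_pay_lt hx ((hle.trans (minOnS_le_Mval huniv hx)).trans_lt hM1))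

lemma Mval_Jhat_eq_Mval_univ (hm : 0 < m) (hM1 : Mval uL Set.univ < Mval uL {j1}) :
    Mval uL (Jhat uL j1) = Mval uL Set.univ :=
  (Mval_eq_comp hm (Jhat_nonempty hm hM1) monotone_id
    fun _ hx => minOnS_univ_eq_minOnS_Jhat hM1 hx).symm

lemma div_sub_le_Wval_sub_one (i : Fin m) (hj : j ∈ Jhat uL j1) :
    (uL i j - β) / γ ≤ Wval uL j1 γ β - 1 := by
  have hfin : {v : ℝ | ∃ i : Fin m, ∃ ℓ ∈ Jhat uL j1, v = (uL i ℓ - β) / γ}.Finite :=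
    (Set.finite_range fun p : Fin m × Fin n => (uL p.1 p.2 - β) / γ).subset
      fun _ ⟨i, ℓ, _, hv⟩ => ⟨(i, ℓ), hv.symm⟩
  have := le_csSup hfin.bddAbove ⟨i, j, hj, rfl⟩
  rw [Wval]
  linarith

lemma pay_tuL15_of_mem (hx : x ∈ simplex m) (hj : j ∈ Jhat uL j1) :
    pay (tuL15 uL j1 γ β) x j = (pay uL x j - β) / γ := by
  simp only [pay, tuL15, if_pos hj, mul_div_assoc', mul_sub, ← Finset.sum_div,
    Finset.sum_sub_distrib, ← Finset.sum_mul, hx.2, one_mul]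

lemma pay_tuL15_of_notMem (hx : x ∈ simplex m) (hj : j ∉ Jhat uL j1) :
    pay (tuL15 uL j1 γ β) x j = Wval uL j1 γ β :=
  pay_eq_of_forall_eq hx fun _ => if_neg hj

lemma minOnS_tuL15_univ_lt_Wval (hJ : (Jhat uL j1).Nonempty) (hx : x ∈ simplex m) :
    minOnS (tuL15 uL j1 γ β) Set.univ x < Wval uL j1 γ β := by
  obtain ⟨ℓ, hℓ⟩ := hJ
  have hpay : pay (tuL15 uL j1 γ β) x ℓ ≤ Wval uL j1 γ β - 1 :=
    pay_le_of_forall_le hx fun i => by rw [tuL15, if_pos hℓ]; exact div_sub_le_Wval_sub_one i hℓ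
  linarith [minOnS_le_pay (u := tuL15 uL j1 γ β) (x := x) (Set.mem_univ ℓ)]

lemma Mval_tuL15_univ_lt_Wval (hm : 0 < m) (hJ : (Jhat uL j1).Nonempty) :
    Mval (tuL15 uL j1 γ β) Set.univ < Wval uL j1 γ β := by
  obtain ⟨x, hx, hMx⟩ := (isGreatest_Mval (u := tuL15 uL j1 γ β) hm ⟨j1, Set.mem_univ j1⟩).1
  exact hMx ▸ minOnS_tuL15_univ_lt_Wval hJ hx

lemma minOnS_tuL15_of_subset (hγ : 0 ≤ γ) (hSJ : S ⊆ Jhat uL j1) (hS : S.Nonempty)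
    (hx : x ∈ simplex m) : minOnS (tuL15 uL j1 γ β) S x = (minOnS uL S x - β) / γ :=
  minOnS_eq_comp (monotone_sub_div β hγ) hS fun _ hj => pay_tuL15_of_mem hx (hSJ hj)

lemma Mval_tuL15_of_subset (hm : 0 < m) (hγ : 0 ≤ γ) (hSJ : S ⊆ Jhat uL j1) (hS : S.Nonempty) :
    Mval (tuL15 uL j1 γ β) S = (Mval uL S - β) / γ :=
  Mval_eq_comp hm hS (monotone_sub_div β hγ) fun _ hx => minOnS_tuL15_of_subset hγ hSJ hS hx

lemma minOnS_tuL15_univ (hγ : 0 ≤ γ) (hJ : (Jhat uL j1).Nonempty) (hx : x ∈ simplex m) :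
    minOnS (tuL15 uL j1 γ β) Set.univ x = (minOnS uL (Jhat uL j1) x - β) / γ := by
  rw [← minOnS_tuL15_of_subset hγ subset_rfl hJ hx]
  refine minOnS_eq_of_lt_pay ⟨j1, Set.mem_univ j1⟩ (Set.subset_univ _) fun j _ hj => ?_
  rw [pay_tuL15_of_notMem hx hj]
  exact minOnS_tuL15_univ_lt_Wval hJ hx

lemma Mval_tuL15_univ (hm : 0 < m) (hγ : 0 ≤ γ) (hM1 : Mval uL Set.univ < Mval uL {j1}) :
    Mval (tuL15 uL j1 γ β) Set.univ = (Mval uL Set.univ - β) / γ := by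
  have hJ := Jhat_nonempty hm hM1
  rw [← Mval_Jhat_eq_Mval_univ hm hM1]
  exact Mval_eq_comp hm hJ (monotone_sub_div β hγ) fun _ hx => minOnS_tuL15_univ hγ hJ hx

end Surrogate

theorem surrogate_equivalence_general {m n : ℕ} (hm : 0 < m)
    (uL : Fin m → Fin n → ℝ) (j1 : Fin n)
    (hM1 : Mval uL Set.univ < Mval uL {j1})
    (γ : ℝ) (hγ : 0 < γ) (β : ℝ) :
    (Jhat uL j1).Nonempty ∧
    ∀ (J : Set (Fin n)) (xstar : Fin m → ℝ), xstar ∈ simplex m →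
      ((∀ j ∈ J, pay uL xstar j = Mval uL J ∧ Mval uL J = Mval uL Set.univ) ↔
        (∀ j ∈ J, pay (tuL15 uL j1 γ β) xstar j = Mval (tuL15 uL j1 γ β) J ∧
          Mval (tuL15 uL j1 γ β) J = Mval (tuL15 uL j1 γ β) Set.univ)) := by
  have hJ := Jhat_nonempty hm hM1
  refine ⟨hJ, fun J xstar hx => ?_⟩
  rcases J.eq_empty_or_nonempty with rfl | hJne
  · simp
  by_cases hsub : J ⊆ Jhat uL j1
  · refine forall₂_congr fun j hj => ?_
    rw [pay_tuL15_of_mem hx (hsub hj), Mval_tuL15_of_subset hm hγ.le hsub hJne,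
      Mval_tuL15_univ hm hγ.le hM1, div_left_inj' hγ.ne', div_left_inj' hγ.ne', sub_left_inj,
      sub_left_inj]
  · obtain ⟨j, hj, hjJ⟩ := Set.not_subset.mp hsub
    refine iff_of_false (fun h => hjJ (mem_Jhat_of_pay_lt hx ?_)) fun h => ?_
    · rw [(h j hj).1, (h j hj).2]
      exact hM1
    · refine (Mval_tuL15_univ_lt_Wval (γ := γ) (β := β) hm hJ).ne ?_
      rw [← (h j hj).2, ← (h j hj).1, pay_tuL15_of_notMem hx hjJ]

/-- Ĵ is nonempty, and for any J ⊆ [n] and x* ∈ Δ_m,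
(u^L(x*,j) = M_J = M_{[n]} for all j ∈ J) iff (ũ^L(x*,j) = M̃_J = M̃_{[n]} for all j ∈ J). -/
theorem surrogate_equivalence {m n : ℕ} (hm : 0 < m)
    (uL : Fin m → Fin n → ℝ) (j1 : Fin n)
    (hmin1 : ∀ j : Fin n, Mval uL {j1} ≤ Mval uL {j})
    (hM1 : Mval uL Set.univ < Mval uL {j1})
    (γ : ℝ) (hγ : 0 < γ) (β : ℝ) :
    (Jhat uL j1).Nonempty ∧
    ∀ (J : Set (Fin n)) (xstar : Fin m → ℝ), xstar ∈ simplex m →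
      ((∀ j ∈ J, pay uL xstar j = Mval uL J ∧ Mval uL J = Mval uL Set.univ) ↔
        (∀ j ∈ J, pay (tuL15 uL j1 γ β) xstar j = Mval (tuL15 uL j1 γ β) J ∧
          Mval (tuL15 uL j1 γ β) J = Mval (tuL15 uL j1 γ β) Set.univ)) :=
  surrogate_equivalence_general hm uL j1 hM1 γ hγ β
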